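/- If the sequences (b_j)_{j≥0} and (λ_j)_{j≥1} are both nondecreasing and all λ_j > 0, then all linearization coefficients a_{mn}^k in p_m p_n = Σ_k a_{mn}^k p_k are nonnegative (Askey's theorem). -/
import Mathlib


open Polynomial

/-- Monic orthogonal polynomials: `p 0 = 1`, `p 1 = x - b 0`,
`p (n+1) = (x - b n) * p n - lam n * p (n-1)` (with `p_{-1} = 0`). -/
noncomputable def recP (b lam : ℕ → ℝ) : ℕ → Polynomial ℝ
  | 0 => 1
  | 1 => X - C (b 0)
  | n + 2 => (X - C (b (n + 1))) * recP b lam (n + 1) - C (lam (n + 1)) * recP b lam n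



lemma recP_monic_deg (b lam : ℕ → ℝ) :
    ∀ n, (recP b lam n).Monic ∧ (recP b lam n).natDegree = n := by
  have key : ∀ n, ((recP b lam n).Monic ∧ (recP b lam n).natDegree = n) ∧
      ((recP b lam (n+1)).Monic ∧ (recP b lam (n+1)).natDegree = n+1) := by
    intro n
    induction n with
    | zero =>
      refine ⟨⟨monic_one, natDegree_one⟩, ?_, ?_⟩
      · show (X - C (b 0)).Monic; exact monic_X_sub_C _
      · show (X - C (b 0)).natDegree = 1; exact natDegree_X_sub_C _
    | succ n ih =>
      refine ⟨ih.2, ?_⟩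
      have h1 : ((X - C (b (n+1))) * recP b lam (n+1)).Monic :=
        (monic_X_sub_C _).mul ih.2.1
      have hd1 : ((X - C (b (n+1))) * recP b lam (n+1)).natDegree = n + 2 := by
        rw [natDegree_mul (monic_X_sub_C _).ne_zero ih.2.1.ne_zero, natDegree_X_sub_C, ih.2.2]
        omega
      have hd2 : (C (lam (n+1)) * recP b lam n).natDegree < n + 2 := by
        calc (C (lam (n+1)) * recP b lam n).natDegree ≤ (recP b lam n).natDegree :=
              natDegree_C_mul_le _ _
          _ < n + 2 := by rw [ih.1.2]; omega
      have heq : recP b lam (n+2) = (X - C (b (n+1))) * recP b lam (n+1)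
          - C (lam (n+1)) * recP b lam n := rfl
      constructor
      · rw [heq]
        apply h1.sub_of_left
        exact degree_lt_degree (by rw [hd1]; exact hd2)
      · rw [heq, natDegree_sub_eq_left_of_natDegree_lt (by rw [hd1]; exact hd2), hd1]
  exact fun n => (key n).1


/-- Nonnegative combinations of the `recP`. -/
def PosC (b lam : ℕ → ℝ) (q : Polynomial ℝ) : Prop :=
  ∃ N : ℕ, ∃ c : ℕ → ℝ, (∀ k, 0 ≤ c k) ∧
    q = ∑ k ∈ Finset.range N, C (c k) * recP b lam k

lemma pad_sum (b lam : ℕ → ℝ) {N M : ℕ} (h : N ≤ M) (c : ℕ → ℝ) :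
    ∑ k ∈ Finset.range M, C (if k < N then c k else 0) * recP b lam k
      = ∑ k ∈ Finset.range N, C (c k) * recP b lam k := by
  rw [← Finset.sum_subset (Finset.range_subset_range.2 h)
    (fun k _ hk => by rw [if_neg (by simpa using hk), map_zero, zero_mul])]
  exact Finset.sum_congr rfl fun k hk => by rw [if_pos (Finset.mem_range.1 hk)]

lemma PosC.add {b lam : ℕ → ℝ} {q r : Polynomial ℝ} (hq : PosC b lam q) (hr : PosC b lam r) :
    PosC b lam (q + r) := by
  obtain ⟨N1, c1, hc1, rfl⟩ := hq
  obtain ⟨N2, c2, hc2, rfl⟩ := hr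
  refine ⟨max N1 N2, fun k => (if k < N1 then c1 k else 0) + (if k < N2 then c2 k else 0),
    ?_, ?_⟩
  · intro k
    have h1 : (0:ℝ) ≤ if k < N1 then c1 k else 0 := by
      by_cases h : k < N1 <;> simp [h, hc1 k]
    have h2 : (0:ℝ) ≤ if k < N2 then c2 k else 0 := by
      by_cases h : k < N2 <;> simp [h, hc2 k]
    exact add_nonneg h1 h2
  have : ∀ k, C ((if k < N1 then c1 k else 0) + (if k < N2 then c2 k else 0)) * recP b lam k
      = C (if k < N1 then c1 k else 0) * recP b lam k + C (if k < N2 then c2 k else 0) * recP b lam k := by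
    intro k; rw [map_add, add_mul]
  rw [Finset.sum_congr rfl fun k _ => this k, Finset.sum_add_distrib,
    pad_sum b lam (le_max_left N1 N2), pad_sum b lam (le_max_right N1 N2)]

lemma PosC.smul {b lam : ℕ → ℝ} {q : Polynomial ℝ} (t : ℝ) (ht : 0 ≤ t) (hq : PosC b lam q) :
    PosC b lam (C t * q) := by
  obtain ⟨N, c, hc, rfl⟩ := hq
  refine ⟨N, fun k => t * c k, fun k => mul_nonneg ht (hc k), ?_⟩
  rw [Finset.mul_sum]
  exact Finset.sum_congr rfl fun k _ => by rw [map_mul, mul_assoc]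

lemma PosC.single (b lam : ℕ → ℝ) (j : ℕ) : PosC b lam (recP b lam j) := by
  refine ⟨j + 1, fun k => if k = j then 1 else 0, ?_, ?_⟩
  · intro k; positivity
  · have : ∀ k ∈ Finset.range (j+1),
        C (if k = j then (1:ℝ) else 0) * recP b lam k
          = if k = j then recP b lam j else 0 := by
      intro k _
      by_cases h : k = j <;> simp [h]
    rw [Finset.sum_congr rfl this, Finset.sum_ite_eq' (Finset.range (j+1)) j,
      if_pos (Finset.mem_range.2 (Nat.lt_succ_self j))]


lemma main_ind (b lam : ℕ → ℝ) (hb : Monotone b)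
    (hlam : ∀ i j, 1 ≤ i → i ≤ j → lam i ≤ lam j)
    (hpos : ∀ j ≥ 1, 0 < lam j) :
    ∀ m, (∀ n, m ≤ n → PosC b lam (recP b lam m * recP b lam n)) ∧
      (1 ≤ m → ∀ n, m ≤ n →
        PosC b lam (recP b lam m * recP b lam n - recP b lam (m-1) * recP b lam (n+1))) := by
  intro m
  induction m with
  | zero =>
    refine ⟨fun n _ => ?_, fun h => absurd h (by omega)⟩
    have : recP b lam 0 * recP b lam n = recP b lam n := by
      show (1 : Polynomial ℝ) * recP b lam n = recP b lam n; rw [one_mul]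
    rw [this]; exact PosC.single b lam n
  | succ m ih =>
    have hB : ∀ n, m + 1 ≤ n →
        PosC b lam (recP b lam (m+1) * recP b lam n - recP b lam m * recP b lam (n+1)) := by
      intro n hn
      match m, n with
      | 0, n'+1 =>
        have key : recP b lam 1 * recP b lam (n'+1) - recP b lam 0 * recP b lam (n'+2)
            = C (b (n'+1) - b 0) * recP b lam (n'+1) + C (lam (n'+1)) * recP b lam n' := by
          have e1 : recP b lam 1 = X - C (b 0) := rfl
          have e2 : recP b lam (n'+2) = (X - C (b (n'+1))) * recP b lam (n'+1)
              - C (lam (n'+1)) * recP b lam n' := rfl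
          have e0 : recP b lam 0 = 1 := rfl
          rw [e1, e2, e0, map_sub]; ring
        rw [key]
        exact (PosC.smul _ (sub_nonneg.2 (hb (by omega))) (PosC.single b lam (n'+1))).add
          (PosC.smul _ (hpos (n'+1) (by omega)).le (PosC.single b lam n'))
      | m''+1, n''+2 =>
        have key : recP b lam (m''+2) * recP b lam (n''+2)
              - recP b lam (m''+1) * recP b lam (n''+3)
            = C (b (n''+2) - b (m''+1)) * (recP b lam (m''+1) * recP b lam (n''+2))
            + C (lam (n''+2) - lam (m''+1)) * (recP b lam (m''+1) * recP b lam (n''+1))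
            + C (lam (m''+1)) * (recP b lam (m''+1) * recP b lam (n''+1)
                - recP b lam m'' * recP b lam (n''+2)) := by
          have e1 : recP b lam (m''+2) = (X - C (b (m''+1))) * recP b lam (m''+1)
              - C (lam (m''+1)) * recP b lam m'' := rfl
          have e2 : recP b lam (n''+3) = (X - C (b (n''+2))) * recP b lam (n''+2)
              - C (lam (n''+2)) * recP b lam (n''+1) := rfl
          rw [e1, e2, map_sub, map_sub]; ring
        have h1 : PosC b lam (recP b lam (m''+1) * recP b lam (n''+2)) :=
          ih.1 (n''+2) (by omega)
        have h2 : PosC b lam (recP b lam (m''+1) * recP b lam (n''+1)) :=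
          ih.1 (n''+1) (by omega)
        have h3 : PosC b lam (recP b lam (m''+1) * recP b lam (n''+1)
            - recP b lam m'' * recP b lam (n''+2)) := by
          have := ih.2 (by omega) (n''+1) (by omega)
          simpa using this
        rw [key]
        exact ((PosC.smul _ (sub_nonneg.2 (hb (by omega : m''+1 ≤ n''+2))) h1).add
          (PosC.smul _ (sub_nonneg.2 (hlam (m''+1) (n''+2) (by omega) (by omega))) h2)).add
          (PosC.smul _ (hpos (m''+1) (by omega)).le h3)
    refine ⟨fun n hn => ?_, fun _ n hn => by simpa using hB n hn⟩
    have := (hB n hn).add (ih.1 (n+1) (by omega))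
    rwa [sub_add_cancel] at this


lemma sum_eq_zero (b lam : ℕ → ℝ) :
    ∀ M (d : ℕ → ℝ), (∑ k ∈ Finset.range M, C (d k) * recP b lam k) = 0 →
      ∀ k < M, d k = 0 := by
  intro M
  induction M with
  | zero => intro d _ k hk; omega
  | succ M ih =>
    intro d h
    have hM : d M = 0 := by
      have hc := congrArg (fun q => Polynomial.coeff q M) h
      simp only [Finset.sum_range_succ, coeff_add, finset_sum_coeff, coeff_C_mul, coeff_zero] at hc
      have hz : ∀ k ∈ Finset.range M, d k * (recP b lam k).coeff M = 0 := by
        intro k hk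
        rw [coeff_eq_zero_of_natDegree_lt
          (by rw [(recP_monic_deg b lam k).2]; exact Finset.mem_range.1 hk), mul_zero]
      rw [Finset.sum_eq_zero hz, zero_add] at hc
      have : (recP b lam M).coeff M = 1 := by
        have := (recP_monic_deg b lam M).1.coeff_natDegree
        rwa [(recP_monic_deg b lam M).2] at this
      rw [this, mul_one] at hc
      exact hc
    have h' : (∑ k ∈ Finset.range M, C (d k) * recP b lam k) = 0 := by
      rw [Finset.sum_range_succ, hM, map_zero, zero_mul, add_zero] at h
      exact h
    intro k hk
    rcases Nat.lt_succ_iff_lt_or_eq.1 hk with h1 | h1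
    · exact ih d h' k h1
    · rw [h1]; exact hM

/-- Askey's theorem: if `(b_j)` and `(λ_j)_{j≥1}` are nondecreasing and
`λ_j > 0`, then all linearization coefficients are nonnegative. -/
theorem stmt_7 (b lam : ℕ → ℝ) (hb : Monotone b)
    (hlam : ∀ i j, 1 ≤ i → i ≤ j → lam i ≤ lam j)
    (hpos : ∀ j ≥ 1, 0 < lam j)
    (m n : ℕ) (a : ℕ → ℝ)
    (ha : recP b lam m * recP b lam n =
      ∑ k ∈ Finset.range (m + n + 1), C (a k) * recP b lam k) :
    ∀ k ≤ m + n, 0 ≤ a k := by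
  have hsym : PosC b lam (recP b lam m * recP b lam n) := by
    rcases le_total m n with h | h
    · exact (main_ind b lam hb hlam hpos m).1 n h
    · rw [mul_comm]; exact (main_ind b lam hb hlam hpos n).1 m h
  obtain ⟨N, c, hc, hrep⟩ := hsym
  intro k hk
  set M := max (m + n + 1) N with hM
  have key : ∑ j ∈ Finset.range M,
      C ((if j < m + n + 1 then a j else 0) - (if j < N then c j else 0)) * recP b lam j = 0 := by
    have hsplit : ∀ j, C ((if j < m + n + 1 then a j else 0) - (if j < N then c j else 0))
          * recP b lam j
        = C (if j < m + n + 1 then a j else 0) * recP b lam j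
          - C (if j < N then c j else 0) * recP b lam j := by
      intro j; rw [map_sub, sub_mul]
    rw [Finset.sum_congr rfl fun j _ => hsplit j, Finset.sum_sub_distrib,
      pad_sum b lam (le_max_left _ _), pad_sum b lam (le_max_right _ _), ← ha, ← hrep, sub_self]
  have hz := sum_eq_zero b lam M _ key k (by omega)
  rw [if_pos (by omega)] at hz
  have heq : a k = if k < N then c k else 0 := by linarith [sub_eq_zero.1 hz]
  by_cases hN : k < N
  · rw [if_pos hN] at heq; rw [heq]; exact hc k
  · rw [if_neg hN] at heq; rw [heq]
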